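/- arXiv:2504.09771 — 4 statements merged into one kernel-verified Lean document; each statement's English description precedes it below -/
import Mathlib

section
/- Let X and Y be skew-Hermitian N×N complex matrices. Then ‖exp(X) − exp(Y)‖_op ≤ ‖X − Y‖_op, where exp denotes the matrix exponential. -/
open scoped Matrix

/-- The operator norm (largest singular value) of a complex square matrix. -/
noncomputable def opNorm {N : ℕ} (A : Matrix (Fin N) (Fin N) ℂ) : ℝ :=
  ‖Matrix.toEuclideanCLM (𝕜 := ℂ) A‖

/-!
The path `t ↦ exp ((1 - t) • a) * exp (t • b)` runs from `exp a` to `exp b` with velocity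
`exp ((1 - t) • a) * (b - a) * exp (t • b)`. For skew-adjoint `a`, `b` the outer factors are
unitary, so in a C⋆-ring the velocity has norm exactly `‖b - a‖`, and the mean value inequality
bounds `‖exp a - exp b‖` by it.
-/

open NormedSpace

section

variable {𝕂 𝔸 : Type*} [RCLike 𝕂] [NormedRing 𝔸] [NormedAlgebra 𝕂 𝔸] [CompleteSpace 𝔸]

theorem hasDerivAt_exp_smul_mul_exp_smul (a b : 𝔸) (t : 𝕂) :
    HasDerivAt (fun s : 𝕂 => exp ((1 - s) • a) * exp (s • b))
      (exp ((1 - t) • a) * (b - a) * exp (t • b)) t := by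
  have hA : HasDerivAt (fun s : 𝕂 => exp ((1 - s) • a)) (-(exp ((1 - t) • a) * a)) t := by
    simpa using (hasDerivAt_exp_smul_const a (1 - t)).comp_const_sub 1 t
  refine (hA.mul (hasDerivAt_exp_smul_const' b t)).congr_deriv ?_
  simp only [mul_sub, sub_mul, neg_mul, mul_assoc]
  abel

end

section

variable {𝔸 : Type*} [NormedRing 𝔸] [NormedAlgebra ℝ 𝔸] [CompleteSpace 𝔸] [StarRing 𝔸]
  [CStarRing 𝔸] [StarModule ℝ 𝔸]

theorem exp_smul_mem_unitary_of_mem_skewAdjoint {a : 𝔸} (ha : a ∈ skewAdjoint 𝔸) (t : ℝ) :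
    exp (t • a) ∈ unitary 𝔸 :=
  letI : NormedAlgebra ℚ 𝔸 := .restrictScalars ℚ ℝ 𝔸
  exp_mem_unitary_of_mem_skewAdjoint (skewAdjoint.smul_mem t ha)

theorem norm_exp_sub_exp_le_of_mem_skewAdjoint {a b : 𝔸} (ha : a ∈ skewAdjoint 𝔸)
    (hb : b ∈ skewAdjoint 𝔸) : ‖exp a - exp b‖ ≤ ‖a - b‖ := by
  have hderiv := hasDerivAt_exp_smul_mul_exp_smul (𝕂 := ℝ) a b
  have hvelocity (t : ℝ) : ‖exp ((1 - t) • a) * (b - a) * exp (t • b)‖ = ‖a - b‖ := by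
    rw [CStarRing.norm_mul_mem_unitary _ (exp_smul_mem_unitary_of_mem_skewAdjoint hb t),
      CStarRing.norm_mem_unitary_mul _ (exp_smul_mem_unitary_of_mem_skewAdjoint ha (1 - t)),
      norm_sub_rev]
  have hmvt := norm_image_sub_le_of_norm_deriv_le_segment_01'
    (fun t _ => (hderiv t).hasDerivWithinAt) fun t _ => (hvelocity t).le
  simpa [norm_sub_rev] using hmvt

end

/-- Upper-bound half of Lemma 2: for skew-Hermitian `X`, `Y`,
`‖exp(X) − exp(Y)‖_op ≤ ‖X − Y‖_op`. -/
theorem opNorm_exp_sub_exp_le {N : ℕ}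
    (X Y : Matrix (Fin N) (Fin N) ℂ)
    (hX : Xᴴ = -X) (hY : Yᴴ = -Y) :
    opNorm (NormedSpace.exp X - NormedSpace.exp Y) ≤ opNorm (X - Y) :=
  -- `opNorm` is the norm of this C⋆-algebra structure, whose topology is the usual one.
  letI : CStarAlgebra (Matrix (Fin N) (Fin N) ℂ) := Matrix.instCStarAlgebra
  norm_exp_sub_exp_le_of_mem_skewAdjoint (skewAdjoint.mem_iff.2 hX) (skewAdjoint.mem_iff.2 hY)
end

section
/- Let X and Y be N×N complex matrices with ‖X‖_op ≤ p and ‖Y‖_op ≤ p. Then (2 − exp(p)) · ‖X − Y‖_op ≤ ‖exp(X) − exp(Y)‖_op, where exp denotes the matrix exponential. -/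
open scoped Matrix

open NormedSpace
open scoped Nat

/-!
Expand `exp X - exp Y = ∑ (X ^ n - Y ^ n) / n!`. The `n = 1` term is `X - Y`, and
`‖X ^ n - Y ^ n‖ ≤ n p ^ (n - 1) ‖X - Y‖` bounds the remaining terms by
`∑_{n ≥ 2} p ^ (n - 1) / (n - 1)! ‖X - Y‖ = (exp p - 1) ‖X - Y‖`.
The reverse triangle inequality then gives `(2 - exp p) ‖X - Y‖ ≤ ‖exp X - exp Y‖`.
-/

theorem norm_pow_succ_sub_pow_succ_le {R : Type*} [SeminormedRing R] {a b : R} {r : ℝ}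
    (ha : ‖a‖ ≤ r) (hb : ‖b‖ ≤ r) (n : ℕ) :
    ‖a ^ (n + 1) - b ^ (n + 1)‖ ≤ (n + 1) * r ^ n * ‖a - b‖ := by
  induction n with
  | zero => simp
  | succ n ih =>
    have hr : 0 ≤ r := (norm_nonneg a).trans ha
    have hbpow : ‖b ^ (n + 1)‖ ≤ r ^ (n + 1) :=
      (norm_pow_le' b n.succ_pos).trans (pow_le_pow_left₀ (norm_nonneg b) hb _)
    have split :
        a ^ (n + 2) - b ^ (n + 2) = a * (a ^ (n + 1) - b ^ (n + 1)) + (a - b) * b ^ (n + 1) := by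
      rw [mul_sub, sub_mul, ← pow_succ', ← pow_succ']; abel
    calc ‖a ^ (n + 2) - b ^ (n + 2)‖
        ≤ ‖a‖ * ‖a ^ (n + 1) - b ^ (n + 1)‖ + ‖a - b‖ * ‖b ^ (n + 1)‖ := by
          rw [split]
          exact (norm_add_le _ _).trans (add_le_add (norm_mul_le _ _) (norm_mul_le _ _))
      _ ≤ r * ((n + 1) * r ^ n * ‖a - b‖) + ‖a - b‖ * r ^ (n + 1) := by gcongr
      _ = (↑(n + 1) + 1) * r ^ (n + 1) * ‖a - b‖ := by push_cast; ring

theorem Real.hasSum_pow_div_factorial_succ (r : ℝ) :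
    HasSum (fun n : ℕ => r ^ (n + 1) / (n + 1)!) (Real.exp r - 1) := by
  have h := (hasSum_nat_add_iff' 1).mpr (Real.exp_eq_exp_ℝ ▸ expSeries_div_hasSum_exp r)
  simpa using h

section NormedAlgebra

variable (𝕂 : Type*) {𝔸 : Type*} [RCLike 𝕂] [NormedRing 𝔸] [NormedAlgebra 𝕂 𝔸] [CompleteSpace 𝔸]
include 𝕂

theorem norm_exp_sub_exp_sub_sub_le {a b : 𝔸} {r : ℝ} (ha : ‖a‖ ≤ r) (hb : ‖b‖ ≤ r) :
    ‖exp a - exp b - (a - b)‖ ≤ (Real.exp r - 1) * ‖a - b‖ := by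
  have hsum : HasSum (fun n : ℕ => (n !⁻¹ : 𝕂) • (a ^ n - b ^ n)) (exp a - exp b) := by
    simpa only [smul_sub] using (exp_series_hasSum_exp' a).sub (exp_series_hasSum_exp' b)
  have htail : HasSum (fun n : ℕ => ((n + 2)!⁻¹ : 𝕂) • (a ^ (n + 2) - b ^ (n + 2)))
      (exp a - exp b - (a - b)) := by
    have hhead : ∑ n ∈ Finset.range 2, (n !⁻¹ : 𝕂) • (a ^ n - b ^ n) = a - b := by
      simp [Finset.sum_range_succ]
    simpa only [hhead] using (hasSum_nat_add_iff' 2).mpr hsum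
  refine htail.norm_le_of_bounded
    ((Real.hasSum_pow_div_factorial_succ r).mul_right ‖a - b‖) fun n => ?_
  rw [norm_smul, norm_inv, RCLike.norm_natCast]
  calc ((n + 2)! : ℝ)⁻¹ * ‖a ^ (n + 2) - b ^ (n + 2)‖
      ≤ ((n + 2)! : ℝ)⁻¹ * ((n + 2) * r ^ (n + 1) * ‖a - b‖) := by
        gcongr
        exact (norm_pow_succ_sub_pow_succ_le ha hb (n + 1)).trans_eq (by push_cast; ring)
    _ = r ^ (n + 1) / (n + 1)! * ‖a - b‖ := by
        rw [Nat.factorial_succ (n + 1)]; push_cast; field_simp; ring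

theorem mul_norm_sub_le_norm_exp_sub_exp {a b : 𝔸} {r : ℝ} (ha : ‖a‖ ≤ r) (hb : ‖b‖ ≤ r) :
    (2 - Real.exp r) * ‖a - b‖ ≤ ‖exp a - exp b‖ := by
  have htail := norm_exp_sub_exp_sub_sub_le 𝕂 ha hb
  have htri := norm_sub_le (exp a - exp b) (exp a - exp b - (a - b))
  rw [sub_sub_cancel] at htri
  linarith

end NormedAlgebra

-- `opNorm` unfolds to the norm of the `Matrix.Norms.L2Operator` normed algebra.
open scoped Matrix.Norms.L2Operator in
/-- Lower-bound half of Lemma 2: if `‖X‖_op ≤ p` and `‖Y‖_op ≤ p`, then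
`(2 − exp(p)) ‖X − Y‖_op ≤ ‖exp(X) − exp(Y)‖_op`. -/
theorem le_opNorm_exp_sub_exp {N : ℕ}
    (X Y : Matrix (Fin N) (Fin N) ℂ) (p : ℝ)
    (hX : opNorm X ≤ p) (hY : opNorm Y ≤ p) :
    (2 - Real.exp p) * opNorm (X - Y) ≤
      opNorm (NormedSpace.exp X - NormedSpace.exp Y) :=
  mul_norm_sub_le_norm_exp_sub_exp ℂ (a := X) (b := Y) hX hY
end

section
/- Let u₁, …, u_L and v₁, …, v_L be unitary N×N complex matrices such that u_l = v_l for all l outside a set T of indices with |T| = N_t, and ‖u_l − v_l‖_op ≤ ε for all l ∈ T. Let O be a Hermitian N×N matrix, U = ∏_{l=1}^{L} u_l and V = ∏_{l=1}^{L} v_l. Then ‖U†OU − V†OV‖_op ≤ 2 N_t ε ‖O‖_op. -/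
/-! Multiplication by a unitary preserves the C⋆-norm. Hence conjugating `O` by the unitaries
`U` and `V` gives results at most `2‖U - V‖‖O‖` apart, and telescoping `U - V` one factor at a
time bounds `‖U - V‖` by `∑ ‖u_l - v_l‖`, to which only the indices in `T` contribute. -/

open scoped Matrix

lemma list_prod_ofFn_mem_unitary {M : Type*} [Monoid M] [StarMul M] {L : ℕ} {u : Fin L → M}
    (hu : ∀ l, u l ∈ unitary M) : (List.ofFn u).prod ∈ unitary M :=
  list_prod_mem <| List.forall_mem_ofFn_iff.mpr hu

section CStarRing

variable {E : Type*} [NormedRing E] [StarRing E] [CStarRing E]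

lemma norm_list_prod_ofFn_sub_le_sum {L : ℕ} (u v : Fin L → E)
    (hu : ∀ l, u l ∈ unitary E) (hv : ∀ l, v l ∈ unitary E) :
    ‖(List.ofFn u).prod - (List.ofFn v).prod‖ ≤ ∑ l, ‖u l - v l‖ := by
  induction L with
  | zero => simp
  | succ L ih =>
    simp only [List.ofFn_succ, List.prod_cons, Fin.sum_univ_succ]
    set P := (List.ofFn fun i : Fin L => u i.succ).prod
    set Q := (List.ofFn fun i : Fin L => v i.succ).prod
    have hQ : Q ∈ unitary E := list_prod_ofFn_mem_unitary fun i => hv i.succ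
    calc ‖u 0 * P - v 0 * Q‖ = ‖(u 0 - v 0) * Q + u 0 * (P - Q)‖ := by noncomm_ring
      _ ≤ ‖(u 0 - v 0) * Q‖ + ‖u 0 * (P - Q)‖ := norm_add_le _ _
      _ = ‖u 0 - v 0‖ + ‖P - Q‖ := by
        rw [CStarRing.norm_mul_mem_unitary _ hQ, CStarRing.norm_mem_unitary_mul _ (hu 0)]
      _ ≤ ‖u 0 - v 0‖ + ∑ i : Fin L, ‖u i.succ - v i.succ‖ := by
        gcongr
        exact ih _ _ (fun i => hu i.succ) (fun i => hv i.succ)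

lemma norm_list_prod_ofFn_sub_le_card_mul {L : ℕ} (u v : Fin L → E)
    (hu : ∀ l, u l ∈ unitary E) (hv : ∀ l, v l ∈ unitary E)
    (T : Finset (Fin L)) (heq : ∀ l ∉ T, u l = v l)
    {ε : ℝ} (hε : ∀ l ∈ T, ‖u l - v l‖ ≤ ε) :
    ‖(List.ofFn u).prod - (List.ofFn v).prod‖ ≤ T.card * ε := by
  have hsupp : ∑ l ∈ T, ‖u l - v l‖ = ∑ l, ‖u l - v l‖ :=
    Finset.sum_subset (Finset.subset_univ T) fun l _ hl => by simp [heq l hl]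
  calc ‖(List.ofFn u).prod - (List.ofFn v).prod‖ ≤ ∑ l, ‖u l - v l‖ :=
        norm_list_prod_ofFn_sub_le_sum u v hu hv
    _ = ∑ l ∈ T, ‖u l - v l‖ := hsupp.symm
    _ ≤ T.card * ε := by simpa using Finset.sum_le_card_nsmul T _ ε hε

lemma norm_star_mul_mul_sub_star_mul_mul_le {U V : E} (hU : U ∈ unitary E)
    (hV : V ∈ unitary E) (O : E) :
    ‖star U * O * U - star V * O * V‖ ≤ 2 * ‖U - V‖ * ‖O‖ := by
  calc ‖star U * O * U - star V * O * V‖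
      = ‖star U * (O * (U - V)) + star (U - V) * (O * V)‖ := by
        rw [star_sub]; noncomm_ring
    _ ≤ ‖star U * (O * (U - V))‖ + ‖star (U - V) * (O * V)‖ := norm_add_le _ _
    _ = ‖O * (U - V)‖ + ‖star (U - V) * O‖ := by
        rw [CStarRing.norm_mem_unitary_mul _ (Unitary.star_mem hU), ← mul_assoc,
          CStarRing.norm_mul_mem_unitary _ hV]
    _ ≤ ‖O‖ * ‖U - V‖ + ‖U - V‖ * ‖O‖ := by
        gcongr
        · exact norm_mul_le _ _
        · exact (norm_mul_le _ _).trans_eq (by rw [norm_star])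
    _ = 2 * ‖U - V‖ * ‖O‖ := by ring

end CStarRing

theorem opNorm_conj_prod_sub_conj_prod_le_general {N L : ℕ}
    (u v : Fin L → Matrix (Fin N) (Fin N) ℂ)
    (hu : ∀ l, u l ∈ Matrix.unitaryGroup (Fin N) ℂ)
    (hv : ∀ l, v l ∈ Matrix.unitaryGroup (Fin N) ℂ)
    (T : Finset (Fin L)) (Nt : ℕ) (hT : T.card = Nt)
    (heq : ∀ l ∉ T, u l = v l)
    (ε : ℝ) (hδ : ∀ l ∈ T, opNorm (u l - v l) ≤ ε)
    (O : Matrix (Fin N) (Fin N) ℂ) :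
    opNorm ((List.ofFn u).prodᴴ * O * (List.ofFn u).prod -
        (List.ofFn v).prodᴴ * O * (List.ofFn v).prod) ≤
      2 * Nt * ε * opNorm O := by
  -- Under the L² operator norm matrices form a C⋆-ring, and `opNorm A` is `‖A‖` by definition.
  open Matrix.Norms.L2Operator in
  calc opNorm ((List.ofFn u).prodᴴ * O * (List.ofFn u).prod -
        (List.ofFn v).prodᴴ * O * (List.ofFn v).prod)
      ≤ 2 * ‖(List.ofFn u).prod - (List.ofFn v).prod‖ * ‖O‖ :=
        norm_star_mul_mul_sub_star_mul_mul_le (list_prod_ofFn_mem_unitary hu)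
          (list_prod_ofFn_mem_unitary hv) O
    _ ≤ 2 * (T.card * ε) * ‖O‖ := by
        gcongr
        exact norm_list_prod_ofFn_sub_le_card_mul u v hu hv T heq hδ
    _ = 2 * Nt * ε * opNorm O := by rw [hT, ← mul_assoc]; rfl

/-- Per-gate approximation bound (Eq. (9)): if the unitaries `u_l`, `v_l` agree outside a
set `T` of `N_t` indices and differ by at most `ε` in operator norm on `T`, then for
`U = ∏ u_l`, `V = ∏ v_l` and Hermitian `O`, `‖U†OU − V†OV‖_op ≤ 2 N_t ε ‖O‖_op`. -/
theorem opNorm_conj_prod_sub_conj_prod_le {N L : ℕ}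
    (u v : Fin L → Matrix (Fin N) (Fin N) ℂ)
    (hu : ∀ l, u l ∈ Matrix.unitaryGroup (Fin N) ℂ)
    (hv : ∀ l, v l ∈ Matrix.unitaryGroup (Fin N) ℂ)
    (T : Finset (Fin L)) (Nt : ℕ) (hT : T.card = Nt)
    (heq : ∀ l ∉ T, u l = v l)
    (ε : ℝ) (hδ : ∀ l ∈ T, opNorm (u l - v l) ≤ ε)
    (O : Matrix (Fin N) (Fin N) ℂ) (hO : O.IsHermitian) :
    opNorm ((List.ofFn u).prodᴴ * O * (List.ofFn u).prod -
        (List.ofFn v).prodᴴ * O * (List.ofFn v).prod) ≤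
      2 * Nt * ε * opNorm O :=
  opNorm_conj_prod_sub_conj_prod_le_general u v hu hv T Nt hT heq ε hδ O
end

section
/- Let U and V be unitary N×N complex matrices, O a Hermitian N×N matrix, and ρ a density matrix (positive semidefinite Hermitian with trace 1). Then |Tr(U†OUρ) − Tr(V†OVρ)| ≤ 2√N · ‖U − V‖_op · ‖O‖_op. -/
open scoped Matrix ComplexOrder

/-!
Put `M = U†OU − V†OV`, so that the difference of traces is `Tr(Mρ)`. Factoring a density matrix
as `ρ = B†B` turns `Tr(Mρ)` into a sum of expectation values `⟨bᵢ, M bᵢ⟩` with `∑ ‖bᵢ‖² = Tr ρ = 1`,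
hence `|Tr(Mρ)| ≤ ‖M‖`. The identity `M = (U − V)†OU + V†O(U − V)` and unitary invariance of the
operator norm give `‖M‖ ≤ 2‖U − V‖‖O‖`; the remaining factor `√N` is at least `1`.
-/

open scoped InnerProductSpace Matrix.Norms.L2Operator MatrixOrder

theorem norm_sum_inner_apply_self_le {𝕜 E ι : Type*} [RCLike 𝕜] [NormedAddCommGroup E]
    [InnerProductSpace 𝕜 E] [Fintype ι] (T : E →L[𝕜] E) (v : ι → E) :
    ‖∑ i, ⟪v i, T (v i)⟫_𝕜‖ ≤ ‖T‖ * ‖∑ i, ⟪v i, v i⟫_𝕜‖ := by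
  have hsum : ∑ i, ⟪v i, v i⟫_𝕜 = ((∑ i, ‖v i‖ ^ 2 : ℝ) : 𝕜) := by
    push_cast
    exact Finset.sum_congr rfl fun i _ => inner_self_eq_norm_sq_to_K (v i)
  rw [hsum, RCLike.norm_ofReal, abs_of_nonneg (by positivity), Finset.mul_sum]
  refine (norm_sum_le _ _).trans (Finset.sum_le_sum fun i _ => ?_)
  calc ‖⟪v i, T (v i)⟫_𝕜‖ ≤ ‖v i‖ * (‖T‖ * ‖v i‖) :=
        (norm_inner_le_norm _ _).trans (by gcongr; exact T.le_opNorm _)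
    _ = ‖T‖ * ‖v i‖ ^ 2 := by ring

theorem norm_star_mul_mul_sub_star_mul_mul_le_s13 {R : Type*} [NormedRing R] [StarRing R]
    [CStarRing R] {u v : R} (hu : u ∈ unitary R) (hv : v ∈ unitary R) (o : R) :
    ‖star u * o * u - star v * o * v‖ ≤ 2 * ‖u - v‖ * ‖o‖ := by
  have hdecomp :
      star u * o * u - star v * o * v = star (u - v) * o * u + star v * (o * (u - v)) := by
    rw [star_sub]; noncomm_ring
  calc ‖star u * o * u - star v * o * v‖
      ≤ ‖star (u - v) * o * u‖ + ‖star v * (o * (u - v))‖ := hdecomp ▸ norm_add_le _ _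
    _ = ‖star (u - v) * o‖ + ‖o * (u - v)‖ := by
        rw [CStarRing.norm_mul_mem_unitary _ hu,
          CStarRing.norm_mem_unitary_mul _ (Unitary.star_mem hv)]
    _ ≤ ‖u - v‖ * ‖o‖ + ‖o‖ * ‖u - v‖ := by
        gcongr
        · exact (norm_mul_le _ _).trans_eq (by rw [norm_star])
        · exact norm_mul_le _ _
    _ = 2 * ‖u - v‖ * ‖o‖ := by ring

namespace Matrix

variable {𝕜 m n : Type*} [RCLike 𝕜] [Fintype m] [Fintype n] [DecidableEq n]

theorem trace_mul_mul_conjTranspose (A : Matrix n n 𝕜) (B : Matrix m n 𝕜) :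
    (B * A * Bᴴ).trace =
      ∑ i, ⟪WithLp.toLp 2 (star (B i)),
        toEuclideanCLM (𝕜 := 𝕜) A (WithLp.toLp 2 (star (B i)))⟫_𝕜 := by
  refine Finset.sum_congr rfl fun i _ => ?_
  simp only [diag, mul_apply, toEuclideanCLM_toLp, EuclideanSpace.inner_toLp_toLp, star_star,
    conjTranspose_apply, dotProduct, mulVec, Finset.sum_mul, Pi.star_apply]
  rw [Finset.sum_comm]
  exact Finset.sum_congr rfl fun j _ => Finset.sum_congr rfl fun k _ => by ring

theorem PosSemidef.norm_trace_mul_le (A : Matrix n n 𝕜) {ρ : Matrix n n 𝕜} (hρ : ρ.PosSemidef) :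
    ‖(A * ρ).trace‖ ≤ ‖A‖ * ‖ρ.trace‖ := by
  obtain ⟨B, rfl⟩ := CStarAlgebra.nonneg_iff_eq_star_mul_self.mp hρ.nonneg
  have hA : (A * (star B * B)).trace = (B * A * Bᴴ).trace := by
    rw [← Matrix.mul_assoc, trace_mul_comm, Matrix.mul_assoc]; rfl
  have htr : (star B * B).trace = (B * 1 * Bᴴ).trace := by
    rw [Matrix.mul_one, trace_mul_comm]; rfl
  rw [hA, htr, trace_mul_mul_conjTranspose, trace_mul_mul_conjTranspose, map_one]
  exact norm_sum_inner_apply_self_le _ _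

end Matrix

theorem abs_trace_conj_sub_trace_conj_le_general {N : ℕ}
    (U V O ρ : Matrix (Fin N) (Fin N) ℂ)
    (hU : U ∈ Matrix.unitaryGroup (Fin N) ℂ)
    (hV : V ∈ Matrix.unitaryGroup (Fin N) ℂ)
    (hρ : ρ.PosSemidef) (hρtr : ρ.trace = 1) :
    ‖Matrix.trace (Uᴴ * O * U * ρ) - Matrix.trace (Vᴴ * O * V * ρ)‖ ≤
      2 * Real.sqrt N * opNorm (U - V) * opNorm O := by
  have hN : (1 : ℝ) ≤ Real.sqrt N := by
    rcases N with _ | N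
    · simp [Matrix.trace] at hρtr
    · simp
  simp only [opNorm, Matrix.l2_opNorm_toEuclideanCLM]
  calc ‖Matrix.trace (Uᴴ * O * U * ρ) - Matrix.trace (Vᴴ * O * V * ρ)‖
      = ‖((Uᴴ * O * U - Vᴴ * O * V) * ρ).trace‖ := by rw [Matrix.sub_mul, Matrix.trace_sub]
    _ ≤ ‖Uᴴ * O * U - Vᴴ * O * V‖ := by
        simpa [hρtr] using hρ.norm_trace_mul_le (Uᴴ * O * U - Vᴴ * O * V)
    _ ≤ 2 * ‖U - V‖ * ‖O‖ := norm_star_mul_mul_sub_star_mul_mul_le_s13 hU hV O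
    _ ≤ 2 * Real.sqrt N * ‖U - V‖ * ‖O‖ := by
        gcongr
        exact le_mul_of_one_le_right zero_le_two hN

/-- Combining Lemmas 3 and 4: for unitary `U`, `V`, Hermitian `O` and a density matrix
`ρ`, `|Tr(U†OUρ) − Tr(V†OVρ)| ≤ 2√N ‖U − V‖_op ‖O‖_op`. -/
theorem abs_trace_conj_sub_trace_conj_le {N : ℕ}
    (U V O ρ : Matrix (Fin N) (Fin N) ℂ)
    (hU : U ∈ Matrix.unitaryGroup (Fin N) ℂ)
    (hV : V ∈ Matrix.unitaryGroup (Fin N) ℂ)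
    (hO : O.IsHermitian)
    (hρ : ρ.PosSemidef) (hρtr : ρ.trace = 1) :
    ‖Matrix.trace (Uᴴ * O * U * ρ) - Matrix.trace (Vᴴ * O * V * ρ)‖ ≤
      2 * Real.sqrt N * opNorm (U - V) * opNorm O :=
  abs_trace_conj_sub_trace_conj_le_general U V O ρ hU hV hρ hρtr
end
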